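/- arXiv:1405.3433 — 3 statements merged into one kernel-verified Lean document; each statement's English description precedes it below -/
import Mathlib

section
/- Let A, B, C be groups such that B is a normal subgroup of A with cyclic quotient A/B, and C is a subgroup of B of finite index. If B is finitely generated, then there exists a subgroup C' of C such that C' is of finite index in B, and there exists a subgroup B' of A of finite index in A with C' a normal subgroup of B' such that the quotient B'/C' is cyclic. -/
/-!
Since `B` is finitely generated, it has only finitely many homomorphisms into the finite group
`Perm (B ⧸ C)`; the intersection `K` of their kernels is a characteristic subgroup of finite index
of `B` contained in `C`. Being characteristic in the normal subgroup `B`, `K` is normal in `A`.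
Take `B' = K ⊔ ⟨a⟩` where `a` maps to a generator of `A ⧸ B`: then `B' ⧸ K` is the image of
`⟨a⟩` in `A ⧸ K`, hence cyclic, and since `B ⊔ B' = A`, the index of `B'` in `A` equals its
index in `B`, which is at most that of `K`.
-/

open Subgroup Pointwise

theorem Group.FG.finite_monoidHom {G M : Type*} [Group G] [Monoid M] [Finite M]
    (hG : Group.FG G) : Finite (G →* M) := by
  obtain ⟨S, hS⟩ := hG.out
  refine Finite.of_injective (fun (f : G →* M) (s : S) => f s) fun f g hfg => ?_
  exact MonoidHom.eq_of_eqOn_dense hS fun x hx => congrFun hfg ⟨x, hx⟩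

namespace Subgroup

variable {G : Type*} [Group G]

theorem exists_characteristic_finiteIndex_le (hG : Group.FG G) (H : Subgroup G)
    [H.FiniteIndex] : ∃ K : Subgroup G, K.Characteristic ∧ K.FiniteIndex ∧ K ≤ H := by
  have := hG.finite_monoidHom (M := Equiv.Perm (G ⧸ H))
  refine ⟨⨅ φ : G →* Equiv.Perm (G ⧸ H), φ.ker, ?_, finiteIndex_iInf fun _ => inferInstance, ?_⟩
  · refine characteristic_iff_le_comap.mpr fun ψ x hx => ?_
    simp only [mem_comap, mem_iInf] at hx ⊢
    exact fun φ => hx (φ.comp ψ.toMonoidHom)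
  · refine (iInf_le _ (MulAction.toPermHom G (G ⧸ H))).trans ?_
    rw [← normalCore_eq_ker]
    exact normalCore_le H

theorem index_eq_relIndex_of_sup_eq_top {H N : Subgroup G} [N.Normal] (h : N ⊔ H = ⊤) :
    H.index = H.relIndex N := by
  have hsmul (n : N) : n • ((1 : G) : G ⧸ H) = ((n : G) : G ⧸ H) := by
    change (n : G) • ((1 : G) : G ⧸ H) = _
    rw [MulAction.Quotient.smul_mk, smul_eq_mul, mul_one]
  have : MulAction.IsPretransitive N (G ⧸ H) := by
    refine (MulAction.isPretransitive_iff_base ((1 : G) : G ⧸ H)).mpr fun x => ?_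
    induction x using QuotientGroup.induction_on with | H g => ?_
    obtain ⟨n, hn, k, hk, rfl⟩ : g ∈ (N : Set G) * (H : Set G) := by
      rw [← normal_mul, h]; trivial
    exact ⟨⟨n, hn⟩, by rw [hsmul, QuotientGroup.mk_mul_of_mem n hk]⟩
  have hstab : MulAction.stabilizer N ((1 : G) : G ⧸ H) = H.subgroupOf N := by
    ext n
    rw [MulAction.mem_stabilizer_iff, hsmul, QuotientGroup.eq, mul_one, inv_mem_iff,
      mem_subgroupOf]
  rw [relIndex, ← hstab, MulAction.index_stabilizer_of_transitive, index]

theorem isCyclic_quotient_subgroupOf_sup_zpowers (N : Subgroup G) [N.Normal] (g : G) :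
    IsCyclic ((N ⊔ zpowers g : Subgroup G) ⧸ N.subgroupOf (N ⊔ zpowers g)) := by
  set f := (QuotientGroup.mk' N).comp (N ⊔ zpowers g).subtype
  have hker : f.ker = N.subgroupOf (N ⊔ zpowers g) := by
    rw [← MonoidHom.comap_ker, QuotientGroup.ker_mk']
    rfl
  have hrange : f.range = zpowers (g : G ⧸ N) := by
    rw [MonoidHom.range_comp, range_subtype, map_sup, QuotientGroup.map_mk'_self,
      MonoidHom.map_zpowers, bot_sup_eq, QuotientGroup.mk'_apply]
  have : IsCyclic f.range := hrange ▸ isCyclic_zpowers _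
  exact ((QuotientGroup.quotientMulEquivOfEq hker).symm.trans
    (QuotientGroup.quotientKerEquivRange f)).isCyclic.mpr this

theorem sup_zpowers_eq_top_of_generator (N : Subgroup G) [N.Normal] {g : G}
    (hg : ∀ x : G ⧸ N, x ∈ zpowers (g : G ⧸ N)) : N ⊔ zpowers g = ⊤ := by
  rw [sup_comm, ← QuotientGroup.ker_mk' N, ← comap_map_eq, MonoidHom.map_zpowers,
    QuotientGroup.mk'_apply, (eq_top_iff' _).mpr hg, comap_top]

end Subgroup

theorem stmt_0_general {A : Type*} [Group A] (B C : Subgroup A)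
    [B.Normal] (hcyc : IsCyclic (A ⧸ B))
    (hfin : (C.subgroupOf B).FiniteIndex) (hfg : Group.FG B) :
    ∃ C' B' : Subgroup A, C' ≤ C ∧ (C'.subgroupOf B).FiniteIndex ∧
      B'.FiniteIndex ∧ C' ≤ B' ∧
      ∃ hn : (C'.subgroupOf B').Normal,
        letI := hn
        IsCyclic (B' ⧸ C'.subgroupOf B') := by
  obtain ⟨g, hg⟩ := hcyc.exists_generator
  obtain ⟨a, rfl⟩ := QuotientGroup.mk_surjective g
  obtain ⟨K, hKchar, hKfin, hKC⟩ := exists_characteristic_finiteIndex_le hfg (C.subgroupOf B)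
  set C' := K.map B.subtype
  have hC'B : C'.subgroupOf B = K := comap_map_eq_self_of_injective B.subtype_injective K
  have hB'fin : (C' ⊔ zpowers a).FiniteIndex := by
    have hsup : B ⊔ (C' ⊔ zpowers a) = ⊤ :=
      top_le_iff.mp <| (sup_zpowers_eq_top_of_generator B hg).ge.trans <|
        sup_le_sup_left le_sup_right B
    have : ((C' ⊔ zpowers a).subgroupOf B).FiniteIndex :=
      finiteIndex_of_le (hC'B ▸ subgroupOf_mono B le_sup_left)
    rw [finiteIndex_iff, index_eq_relIndex_of_sup_eq_top hsup]
    exact FiniteIndex.index_ne_zero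
  refine ⟨C', C' ⊔ zpowers a, ?_, hC'B ▸ hKfin, hB'fin, le_sup_left, inferInstance,
    isCyclic_quotient_subgroupOf_sup_zpowers C' a⟩
  exact (map_mono hKC).trans ((subgroupOf_map_subtype C B).trans_le inf_le_left)

theorem stmt_0 {A : Type*} [Group A] (B C : Subgroup A)
    [B.Normal] (hcyc : IsCyclic (A ⧸ B)) (hCB : C ≤ B)
    (hfin : (C.subgroupOf B).FiniteIndex) (hfg : Group.FG B) :
    ∃ C' B' : Subgroup A, C' ≤ C ∧ (C'.subgroupOf B).FiniteIndex ∧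
      B'.FiniteIndex ∧ C' ≤ B' ∧
      ∃ hn : (C'.subgroupOf B').Normal,
        letI := hn
        IsCyclic (B' ⧸ C'.subgroupOf B') :=
  stmt_0_general B C hcyc hfin hfg
end

section
/- Let G be a group and H a normal subgroup of G. If the quotient G/H is virtually polycyclic and H is finitely generated and virtually solvable, then G is virtually solvable. -/
/-- A group is polycyclic if it admits a subnormal series with cyclic quotients. -/
def IsPolycyclic (G : Type*) [Group G] : Prop :=
  ∃ (n : ℕ) (s : Fin (n + 1) → Subgroup G),
    s 0 = ⊥ ∧ s (Fin.last n) = ⊤ ∧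
    ∀ i : Fin n, s i.castSucc ≤ s i.succ ∧
      ∃ hn : ((s i.castSucc).subgroupOf (s i.succ)).Normal,
        letI := hn
        IsCyclic (s i.succ ⧸ (s i.castSucc).subgroupOf (s i.succ))

/-- A group is virtually polycyclic if it has a polycyclic subgroup of finite index. -/
def IsVirtuallyPolycyclic (G : Type*) [Group G] : Prop :=
  ∃ H : Subgroup G, H.FiniteIndex ∧ IsPolycyclic H

/-- A group is virtually solvable if it has a solvable subgroup of finite index. -/
def IsVirtuallySolvable (G : Type*) [Group G] : Prop :=
  ∃ H : Subgroup G, H.FiniteIndex ∧ IsSolvable H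

/-!
A finitely generated group has only finitely many subgroups of a given finite index, so inside `H`
the intersection `T` of all subgroups of the same index as a solvable finite-index subgroup is a
characteristic, hence `G`-normal, solvable subgroup of finite index. Modulo `T`, the group `H`
becomes finite, and `G ⧸ H` is virtually solvable since polycyclic groups are solvable. Virtual
solvability lifts along a homomorphism with finite kernel `F`, because the centralizer of `F` has
finite index and meets `F` in an abelian group; and it lifts along one with solvable kernel.
-/

instance MonoidHom.finite_of_fg {G P : Type*} [Group G] [Group P] [Group.FG G] [Finite P] :
    Finite (G →* P) := by
  obtain ⟨s, hs⟩ := Group.FG.out (G := G)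
  exact Finite.of_injective (fun φ : G →* P => fun x : (s : Set G) => φ x)
    fun φ ψ h => MonoidHom.eq_of_eqOn_dense hs fun x hx => congrFun h ⟨x, hx⟩

namespace Subgroup

variable {G : Type*} [Group G]

theorem isSolvable_comap_of_injective {G' : Type*} [Group G'] {f : G →* G'}
    (hf : Function.Injective f) (H : Subgroup G') [Group.IsSolvable H] :
    Group.IsSolvable (H.comap f) :=
  Group.isSolvable_of_isSolvable_injective (f := f.subgroupComap H)
    fun _ _ hxy => Subtype.ext (hf (congrArg Subtype.val hxy))

theorem isSolvable_of_le_of_isCyclic_quotient {A B : Subgroup G} (hAB : A ≤ B)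
    [(A.subgroupOf B).Normal] [IsCyclic (B ⧸ A.subgroupOf B)] [Group.IsSolvable A] :
    Group.IsSolvable B := by
  have : Group.IsSolvable (A.subgroupOf B) :=
    Group.isSolvable_of_isSolvable_injective (f := (subgroupOfEquivOfLe hAB).toMonoidHom)
      (subgroupOfEquivOfLe hAB).injective
  let := IsCyclic.commGroup (α := B ⧸ A.subgroupOf B)
  exact (Group.isSolvable_iff_subgroup_quotient (A.subgroupOf B)).2
    ⟨inferInstance, inferInstance⟩

theorem finiteIndex_centralizer (N : Subgroup G) [N.Normal] [Finite N] :
    (centralizer (N : Set G)).FiniteIndex := by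
  refine finiteIndex_of_le (H := (MulAut.conjNormal (H := N)).ker) fun g hg n hn => ?_
  have hconj : g * n * g⁻¹ = n := by
    simpa [MulAut.conjNormal_apply] using
      congrArg (fun e : MulAut N => ((e ⟨n, hn⟩ : N) : G)) hg
  exact (mul_inv_eq_iff_eq_mul.mp hconj).symm

theorem finite_map_mk'_of_finiteIndex_subgroupOf (N H : Subgroup G) [N.Normal]
    [(N.subgroupOf H).FiniteIndex] : Finite (H.map (QuotientGroup.mk' N)) := by
  have hker : ((QuotientGroup.mk' N).comp H.subtype).ker = N.subgroupOf H := by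
    rw [← MonoidHom.comap_ker, QuotientGroup.ker_mk']; rfl
  have : Finite (H ⧸ ((QuotientGroup.mk' N).comp H.subtype).ker) := by
    rw [hker]; infer_instance
  rw [← H.range_subtype, ← MonoidHom.range_comp]
  exact .of_equiv _ (QuotientGroup.quotientKerEquivRange _).toEquiv

-- A subgroup of index `n` is the stabilizer of a point for the action on its `n` cosets.
theorem finite_setOf_index_eq [Group.FG G] {n : ℕ} (hn : n ≠ 0) :
    {K : Subgroup G | K.index = n}.Finite := by
  refine (Set.finite_range fun φp : (G →* Equiv.Perm (Fin n)) × Fin n =>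
    (MulAction.stabilizer _ φp.2).comap φp.1).subset fun K (hK : K.index = n) => ?_
  have : K.FiniteIndex := ⟨hK ▸ hn⟩
  let e : G ⧸ K ≃ Fin n := Finite.equivFinOfCardEq (by rw [← index_eq_card, hK])
  refine ⟨(e.permCongrHom.toMonoidHom.comp (MulAction.toPermHom G (G ⧸ K)),
    e ((1 : G) : G ⧸ K)), ?_⟩
  ext x
  simp [Equiv.permCongr_apply, QuotientGroup.eq]

theorem exists_characteristic_finiteIndex_le_s1 [Group.FG G] (S : Subgroup G) [S.FiniteIndex] :
    ∃ T : Subgroup G, T.Characteristic ∧ T.FiniteIndex ∧ T ≤ S := by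
  have : Finite {K : Subgroup G // K.index = S.index} :=
    (finite_setOf_index_eq FiniteIndex.index_ne_zero).to_subtype
  refine ⟨⨅ K : {K : Subgroup G // K.index = S.index}, K.1, ?_,
    finiteIndex_iInf fun K => ⟨K.2.trans_ne FiniteIndex.index_ne_zero⟩,
    iInf_le_of_le ⟨S, rfl⟩ le_rfl⟩
  refine characteristic_iff_le_comap.mpr fun φ x hx => mem_iInf.mpr fun K => ?_
  exact mem_iInf.mp hx
    ⟨K.1.comap φ.toMonoidHom, (index_comap_of_surjective _ φ.surjective).trans K.2⟩

end Subgroup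

theorem IsPolycyclic.isSolvable {G : Type*} [Group G] (h : IsPolycyclic G) :
    Group.IsSolvable G := by
  obtain ⟨n, s, h0, hn, hstep⟩ := h
  have hsolv : ∀ i, Group.IsSolvable (s i) := by
    refine Fin.induction (by rw [h0]; infer_instance) fun i hi => ?_
    obtain ⟨hle, hnormal, hcyc⟩ := hstep i
    exact Subgroup.isSolvable_of_le_of_isCyclic_quotient hle
  have := hsolv (Fin.last n)
  rw [hn] at this
  exact Group.isSolvable_of_surjective (f := (Subgroup.topEquiv (G := G)).toMonoidHom)
    Subgroup.topEquiv.surjective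

theorem IsVirtuallyPolycyclic.isVirtuallySolvable {G : Type*} [Group G]
    (h : IsVirtuallyPolycyclic G) : IsVirtuallySolvable G :=
  let ⟨P, hPi, hP⟩ := h
  ⟨P, hPi, hP.isSolvable⟩

namespace MonoidHom

variable {G Q : Type*} [Group G] [Group Q]

theorem isSolvable_of_isSolvable_map {f : G →* Q} {D : Subgroup G}
    (hker : Group.IsSolvable (f.ker.subgroupOf D)) (hmap : Group.IsSolvable (D.map f)) :
    Group.IsSolvable D :=
  Group.isSolvable_of_ker_le_range (f.ker.subgroupOf D).subtype (f.subgroupMap D)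
    fun x hx => by simpa [Subgroup.mem_subgroupOf, Subtype.ext_iff] using hx

instance finiteIndex_comap (f : G →* Q) (R : Subgroup Q) [R.FiniteIndex] :
    (R.comap f).FiniteIndex :=
  ⟨by
    rw [Subgroup.index_comap]
    exact Subgroup.isFiniteRelIndex_of_finiteIndex.relIndex_ne_zero⟩

theorem isVirtuallySolvable_of_isSolvable_ker (f : G →* Q) (hker : Group.IsSolvable f.ker)
    (h : IsVirtuallySolvable Q) : IsVirtuallySolvable G := by
  obtain ⟨R, hRi, hR⟩ := h
  have : Group.IsSolvable R := hR
  refine ⟨R.comap f, inferInstance, isSolvable_of_isSolvable_map (f := f) ?_ ?_⟩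
  · exact Subgroup.isSolvable_comap_of_injective (Subgroup.subtype_injective _) f.ker
  · exact Group.isSolvable_of_isSolvable_injective
      (Subgroup.inclusion_injective (R.map_comap_le f))

theorem isVirtuallySolvable_of_finite_ker (f : G →* Q) [Finite f.ker]
    (h : IsVirtuallySolvable Q) : IsVirtuallySolvable G := by
  obtain ⟨R, hRi, hR⟩ := h
  have : Group.IsSolvable R := hR
  have := f.ker.finiteIndex_centralizer
  refine ⟨R.comap f ⊓ Subgroup.centralizer f.ker, inferInstance,
    isSolvable_of_isSolvable_map (f := f) ?_ ?_⟩
  · refine Group.isSolvable_of_comm fun a b => Subtype.ext (Subtype.ext ?_)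
    push_cast
    exact Subgroup.mem_centralizer_iff.mp (Subgroup.mem_inf.mp b.1.2).2 _
      (Subgroup.mem_subgroupOf.mp a.2)
  · exact Group.isSolvable_of_isSolvable_injective
      (Subgroup.inclusion_injective ((Subgroup.map_mono inf_le_left).trans (R.map_comap_le f)))

end MonoidHom

theorem stmt_1 {G : Type*} [Group G] (H : Subgroup G) [H.Normal]
    (hq : IsVirtuallyPolycyclic (G ⧸ H)) (hfg : Group.FG H)
    (hs : IsVirtuallySolvable H) : IsVirtuallySolvable G := by
  obtain ⟨S, hSi, hS⟩ := hs
  have : Group.IsSolvable S := hS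
  obtain ⟨T, hTc, hTi, hTS⟩ := S.exists_characteristic_finiteIndex_le_s1
  set N := T.map H.subtype
  have hNH : N ≤ H := Subgroup.map_subtype_le T
  have hNT : N.subgroupOf H = T := T.comap_map_eq_self_of_injective H.subtype_injective
  have : Group.IsSolvable T :=
    Group.isSolvable_of_isSolvable_injective (Subgroup.inclusion_injective hTS)
  have hN : Group.IsSolvable N :=
    Group.isSolvable_of_surjective (H.subtype.subgroupMap_surjective T)
  have : (N.subgroupOf H).FiniteIndex := hNT ▸ hTi
  set φ := QuotientGroup.map N H (.id G) hNH
  have hφ : φ.ker = H.map (QuotientGroup.mk' N) := QuotientGroup.ker_map _ _ _ _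
  have : Finite φ.ker := hφ ▸ N.finite_map_mk'_of_finiteIndex_subgroupOf H
  have hGN : IsVirtuallySolvable (G ⧸ N) :=
    φ.isVirtuallySolvable_of_finite_ker hq.isVirtuallySolvable
  exact (QuotientGroup.mk' N).isVirtuallySolvable_of_isSolvable_ker
    (by rwa [QuotientGroup.ker_mk']) hGN
end

section
/- Let G be a group containing a non-abelian free subgroup and let N be a normal subgroup of G. Then N contains a non-abelian free subgroup or the quotient G/N contains a non-abelian free subgroup. -/
/-!
If `F ≤ G` is free of rank two, either `N ∩ F` is trivial, so that `F` embeds in `G ⧸ N`, or it is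
a nontrivial normal subgroup of `F`. By Nielsen–Schreier such a subgroup is free; if it is not
cyclic, two of its basis elements generate a free group of rank two. If it were infinite cyclic,
generated by `c`, conjugation would act on it by `c ↦ c^{±1}`, so every square `g ^ 2` would
commute with `c`. But in a free group, commuting elements are powers of a common element, so a
homomorphism to `ℤ` that kills a nontrivial element kills its whole centralizer; the exponent sum
of `b` kills `a ^ 2` but not `b ^ 2`, which forces `c = 1`.
-/

/-- A group has a non-abelian free subgroup if it has a subgroup isomorphic to
the free group of rank 2. -/
def HasFreeSubgroup (G : Type*) [Group G] : Prop :=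
  ∃ S : Subgroup G, Nonempty (S ≃* FreeGroup (Fin 2))

open Subgroup

theorem hasFreeSubgroup_iff_exists_injective {G : Type*} [Group G] :
    HasFreeSubgroup G ↔ ∃ f : FreeGroup (Fin 2) →* G, Function.Injective f := by
  constructor
  · rintro ⟨S, ⟨e⟩⟩
    exact ⟨S.subtype.comp e.symm.toMonoidHom, S.subtype_injective.comp e.symm.injective⟩
  · rintro ⟨f, hf⟩
    exact ⟨f.range, ⟨(MonoidHom.ofInjective hf).symm⟩⟩

theorem HasFreeSubgroup.of_injective {H K : Type*} [Group H] [Group K] {f : H →* K}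
    (hf : Function.Injective f) (h : HasFreeSubgroup H) : HasFreeSubgroup K := by
  obtain ⟨g, hg⟩ := hasFreeSubgroup_iff_exists_injective.mp h
  exact hasFreeSubgroup_iff_exists_injective.mpr ⟨f.comp g, hf.comp hg⟩

theorem not_hasFreeSubgroup_of_isMulCommutative (H : Type*) [Group H] [IsMulCommutative H] :
    ¬HasFreeSubgroup H := by
  rintro ⟨S, ⟨e⟩⟩
  have hcomm : (FreeGroup.of 0 * FreeGroup.of 1 : FreeGroup (Fin 2)) =
      FreeGroup.of 1 * FreeGroup.of 0 := by
    apply e.symm.injective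
    rw [map_mul, map_mul]
    exact Subtype.ext (mul_comm' (M := H) _ _)
  exact absurd hcomm (by decide)

theorem FreeGroupBasis.hasFreeSubgroup {ι H : Type*} [Group H] (b : FreeGroupBasis ι H)
    {i j : ι} (hij : i ≠ j) : HasFreeSubgroup H := by
  refine hasFreeSubgroup_iff_exists_injective.mpr
    ⟨b.repr.symm.toMonoidHom.comp (FreeGroup.map ![i, j]),
      b.repr.symm.injective.comp (FreeGroup.map_injective ?_)⟩
  intro x y
  fin_cases x <;> fin_cases y <;> simp [hij, hij.symm]

theorem IsFreeGroup.isCyclic_or_hasFreeSubgroup (H : Type*) [Group H] [IsFreeGroup H] :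
    IsCyclic H ∨ HasFreeSubgroup H := by
  obtain ⟨ι, ⟨b⟩⟩ := IsFreeGroup.nonempty_basis (G := H)
  rcases subsingleton_or_nontrivial ι with hι | hι
  · have : IsCyclic (FreeGroup ι) := by
      rcases isEmpty_or_nonempty ι with hι' | ⟨⟨i⟩⟩
      · infer_instance
      · have : Unique ι := uniqueOfSubsingleton i
        infer_instance
    exact .inl (isCyclic_of_surjective b.repr.symm b.repr.symm.surjective)
  · obtain ⟨i, j, hij⟩ := exists_pair_ne ι
    exact .inr (b.hasFreeSubgroup hij)

theorem commute_sq_of_conj_mem_zpowers {G : Type*} [Group G] {g c : G} (hc : ¬IsOfFinOrder c)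
    (h₁ : g * c * g⁻¹ ∈ zpowers c) (h₂ : g⁻¹ * c * g ∈ zpowers c) : Commute (g ^ 2) c := by
  obtain ⟨k, hk⟩ := mem_zpowers_iff.mp h₁
  obtain ⟨l, hl⟩ := mem_zpowers_iff.mp h₂
  have hconj (h x : G) (j : ℤ) : h * x ^ j * h⁻¹ = (h * x * h⁻¹) ^ j := by simp
  have hkl : l * k = 1 := by
    apply injective_zpow_iff_not_isOfFinOrder.mpr hc
    calc c ^ (l * k) = g⁻¹ * c ^ k * g⁻¹⁻¹ := by rw [zpow_mul, hl, hconj]; group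
      _ = c ^ (1 : ℤ) := by rw [hk]; group
  have hkk : k * k = 1 := Int.isUnit_mul_self (IsUnit.of_mul_eq_one_right l hkl)
  calc g ^ 2 * c = g * (g * c * g⁻¹) * g⁻¹ * g ^ 2 := by rw [sq]; group
    _ = c ^ (k * k) * g ^ 2 := by rw [← hk, hconj, ← hk, ← zpow_mul]
    _ = c * g ^ 2 := by rw [hkk, zpow_one]

namespace FreeGroup

variable {α : Type*}

theorem exists_zpow_eq_of_commute {x y : FreeGroup α} (h : Commute x y) :
    ∃ d : FreeGroup α, ∃ m n : ℤ, d ^ m = x ∧ d ^ n = y := by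
  set K := closure {x, y}
  have : IsMulCommutative K := isMulCommutative_closure (by
    rintro a (rfl | rfl) b (rfl | rfl)
    exacts [rfl, h.eq, h.symm.eq, rfl])
  -- `K` is free by Nielsen–Schreier.
  have : IsCyclic K :=
    (IsFreeGroup.isCyclic_or_hasFreeSubgroup K).resolve_right
      (not_hasFreeSubgroup_of_isMulCommutative K)
  obtain ⟨d, hd⟩ := IsCyclic.exists_generator (α := K)
  obtain ⟨m, hm⟩ := mem_zpowers_iff.mp (hd ⟨x, subset_closure (by simp)⟩)
  obtain ⟨n, hn⟩ := mem_zpowers_iff.mp (hd ⟨y, subset_closure (by simp)⟩)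
  exact ⟨d, m, n, by simpa using congrArg Subtype.val hm, by simpa using congrArg Subtype.val hn⟩

theorem map_eq_one_of_commute {A : Type*} [Group A] [IsMulTorsionFree A]
    (ψ : FreeGroup α →* A) {c u : FreeGroup α} (hcu : Commute c u) (hu : u ≠ 1)
    (hψu : ψ u = 1) : ψ c = 1 := by
  obtain ⟨d, n, m, rfl, rfl⟩ := exists_zpow_eq_of_commute hcu
  have hm : m ≠ 0 := by rintro rfl; exact hu (zpow_zero d)
  rw [map_zpow, IsMulTorsionFree.zpow_eq_one_iff_left hm] at hψu
  rw [map_zpow, hψu, one_zpow]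

theorem eq_one_of_commute_pow {a b : α} (hab : a ≠ b) {c : FreeGroup α} {n m : ℕ} (hn : n ≠ 0)
    (hm : m ≠ 0) (ha : Commute c (of a ^ n)) (hb : Commute c (of b ^ m)) : c = 1 := by
  classical
  let ψ : FreeGroup α →* Multiplicative ℤ := lift (Pi.mulSingle b (.ofAdd 1))
  have hψc : ψ c = 1 := map_eq_one_of_commute ψ ha
    (by simpa [← norm_eq_zero, norm_of_pow] using hn) (by simp [ψ, hab])
  by_contra hc
  have hψb : ψ (of b ^ m) = 1 := map_eq_one_of_commute ψ hb.symm hc hψc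
  simp only [ψ, map_pow, lift_apply_of, Pi.mulSingle_eq_same] at hψb
  exact hm (by simpa using hψb)

theorem hasFreeSubgroup_of_normal [Nontrivial α] (M : Subgroup (FreeGroup α)) [M.Normal]
    (hM : M ≠ ⊥) : HasFreeSubgroup M := by
  refine (IsFreeGroup.isCyclic_or_hasFreeSubgroup M).resolve_left fun _ => ?_
  obtain ⟨c, hc⟩ := IsCyclic.exists_generator (α := M)
  have hM_le : M ≤ zpowers (c : FreeGroup α) := fun x hx => by
    obtain ⟨k, hk⟩ := mem_zpowers_iff.mp (hc ⟨x, hx⟩)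
    exact ⟨k, by simpa using congrArg Subtype.val hk⟩
  have hc1 : (c : FreeGroup α) ≠ 1 := fun h => hM <| (eq_bot_iff_forall M).mpr fun x hx => by
    simpa [h] using hM_le hx
  have hsq (g : FreeGroup α) : Commute (g ^ 2) c :=
    commute_sq_of_conj_mem_zpowers (not_isOfFinOrder_of_isMulTorsionFree hc1)
      (hM_le (‹M.Normal›.conj_mem _ c.2 g)) (by simpa using hM_le (‹M.Normal›.conj_mem _ c.2 g⁻¹))
  obtain ⟨a, b, hab⟩ := exists_pair_ne α
  exact hc1 (eq_one_of_commute_pow hab two_ne_zero two_ne_zero (hsq _).symm (hsq _).symm)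

end FreeGroup

theorem stmt_8 {G : Type*} [Group G] (hG : HasFreeSubgroup G)
    (N : Subgroup G) [N.Normal] :
    HasFreeSubgroup N ∨ HasFreeSubgroup (G ⧸ N) := by
  obtain ⟨f, hf⟩ := hasFreeSubgroup_iff_exists_injective.mp hG
  by_cases hM : N.comap f = ⊥
  · right
    refine hasFreeSubgroup_iff_exists_injective.mpr ⟨(QuotientGroup.mk' N).comp f, ?_⟩
    rwa [← MonoidHom.ker_eq_bot_iff, ← MonoidHom.comap_ker, QuotientGroup.ker_mk']
  · left
    refine (FreeGroup.hasFreeSubgroup_of_normal _ hM).of_injective (f := f.subgroupComap N) ?_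
    exact fun x y hxy => Subtype.ext (hf (congrArg Subtype.val hxy))
end
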